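/- Let G = (V,E) be a graph with V = {v_1, …, v_n}, and let (X, Y, d) be the associated MCC instance. If J ⊆ V is a dominating set of G with |J| ≤ k, then the collection of balls {B(y_j, 1) : v_j ∈ J} covers X (its union contains every x_i), and for every α ≥ 1 its cost Σ r^α equals |J| ≤ k. -/
import Mathlib

open scoped Classical

/-- The distance function of the MCC instance associated to a graph `G`:
clients `x_i = Sum.inl i`, servers `y_j = Sum.inr j`. -/
noncomputable def mccDist (n : ℕ) (G : SimpleGraph (Fin n)) :
    (Fin n ⊕ Fin n) → (Fin n ⊕ Fin n) → ℝ
  | Sum.inl i, Sum.inl j => if i = j then 0 else 2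
  | Sum.inr i, Sum.inr j => if i = j then 0 else 2
  | Sum.inl i, Sum.inr j => if i = j ∨ G.Adj i j then 1 else 3
  | Sum.inr j, Sum.inl i => if i = j ∨ G.Adj i j then 1 else 3

/-- If `J ⊆ V` is a dominating set of `G` with `|J| ≤ k`, then the collection
of unit balls `{B(y_j, 1) : v_j ∈ J}` covers the client set `X` (every `x_i`
lies in some ball), and for every `α ≥ 1` its cost `Σ r^α = Σ_{j ∈ J} 1^α`
equals `|J|`, which is at most `k`. -/
theorem dominating_set_gives_cover (n : ℕ) (G : SimpleGraph (Fin n)) (k : ℕ)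
    (J : Finset (Fin n))
    (hJdom : ∀ v : Fin n, v ∉ J → ∃ u ∈ J, G.Adj v u)
    (hJcard : J.card ≤ k) :
    (∀ i : Fin n, ∃ j ∈ J, mccDist n G (Sum.inl i) (Sum.inr j) ≤ 1) ∧
    (∀ α : ℝ, 1 ≤ α →
      (∑ _j ∈ J, (1 : ℝ) ^ α) = (J.card : ℝ) ∧ (J.card : ℝ) ≤ (k : ℝ)) := by
  constructor
  · intro i
    by_cases hi : i ∈ J
    · exact ⟨i, hi, by simp [mccDist]⟩
    · obtain ⟨u, hu, hadj⟩ := hJdom i hi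
      refine ⟨u, hu, ?_⟩
      simp [mccDist, hadj]
  · intro α hα
    refine ⟨by simp, ?_⟩
    exact_mod_cast hJcard
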